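/- arXiv:1403.5013 — 4 statements merged into one kernel-verified Lean document; each statement's English description precedes it below -/
import Mathlib

section
/- Let G be a simple graph and f : V(G) → Fin 4 a proper coloring of G such that for every two colors i, j the subgraph of G induced by the vertices colored i or j is acyclic. Let v be a vertex of G whose open neighborhood is exactly {v1, v2, v3, v4}, where v1v2, v2v3, v3v4, v4v1 are edges of G and v1v3, v2v4 are not edges of G. Then exactly one of the equalities f(v1) = f(v3) and f(v2) = f(v4) holds; consequently, f uses exactly three colors on the neighborhood of v. -/
/-!
The rim `v1 v2 v3 v4` together with the centre `v` is properly coloured with four colours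
and `v` is adjacent to all of the rim, so the rim uses at most three colours and one pair of
opposite rim vertices shares a colour. Both pairs cannot: the rim would then be a 4-cycle in
the subgraph induced by two colour classes, which is a forest.
-/

open SimpleGraph

/-- A tree-coloring of `G`: a proper vertex coloring with 4 colors such that for every
two colors the subgraph induced by the vertices of those two colors is acyclic. -/
def IsTreeColoring {V : Type*} (G : SimpleGraph V) (f : V → Fin 4) : Prop :=
  (∀ ⦃u v : V⦄, G.Adj u v → f u ≠ f v) ∧
  ∀ i j : Fin 4, (G.induce {v | f v = i ∨ f v = j}).IsAcyclic

-- Both `a b c` and `a d c` are paths, and a forest has at most one path between two vertices.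
theorem SimpleGraph.IsAcyclic.eq_of_four_cycle {W : Type*} {H : SimpleGraph W}
    (hH : H.IsAcyclic) {a b c d : W} (hab : H.Adj a b) (hbc : H.Adj b c) (hcd : H.Adj c d)
    (hda : H.Adj d a) (hac : a ≠ c) : b = d := by
  let p : H.Path a c :=
    ⟨.cons hab (.cons hbc .nil), by simp [Walk.isPath_def, hab.ne, hbc.ne, hac]⟩
  let q : H.Path a c :=
    ⟨.cons hda.symm (.cons hcd.symm .nil), by simp [Walk.isPath_def, hda.ne', hcd.ne', hac]⟩
  have hpq : p.1.support = q.1.support := by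
    rw [(hH.subsingleton_path a c).elim p q]
  simpa [p, q] using hpq

theorem IsTreeColoring.not_two_colored_four_cycle {V : Type*} {G : SimpleGraph V}
    {f : V → Fin 4} (hf : IsTreeColoring G f) {a b c d : V} (hab : G.Adj a b)
    (hbc : G.Adj b c) (hcd : G.Adj c d) (hda : G.Adj d a) (hac : a ≠ c) (hbd : b ≠ d) :
    ¬ (f a = f c ∧ f b = f d) := by
  rintro ⟨hfac, hfbd⟩
  have hbd' := (hf.2 (f a) (f b)).eq_of_four_cycle (a := ⟨a, .inl rfl⟩) (b := ⟨b, .inr rfl⟩)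
    (c := ⟨c, .inl hfac.symm⟩) (d := ⟨d, .inr hfbd.symm⟩) hab hbc hcd hda (by simpa using hac)
  exact hbd (congrArg Subtype.val hbd')

theorem eq_or_eq_of_ne_of_card_le_four {α : Type*} [Fintype α] [DecidableEq α]
    (hα : Fintype.card α ≤ 4) {x a b c d : α} (hxa : x ≠ a) (hxb : x ≠ b) (hxc : x ≠ c)
    (hxd : x ≠ d) (hab : a ≠ b) (hbc : b ≠ c) (hcd : c ≠ d) (hda : d ≠ a) :
    a = c ∨ b = d := by
  by_contra! h
  have hcard : ({x, a, b, c, d} : Finset α).card = 5 := by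
    rw [Finset.card_insert_of_notMem (by simp [hxa, hxb, hxc, hxd]),
      Finset.card_insert_of_notMem (by simp [hab, h.1, hda.symm]),
      Finset.card_insert_of_notMem (by simp [hbc, h.2]), Finset.card_pair hcd]
  have := Finset.card_le_univ ({x, a, b, c, d} : Finset α)
  omega

theorem Finset.card_four_eq_three_of_xor {α : Type*} [DecidableEq α] {a b c d : α}
    (hab : a ≠ b) (hbc : b ≠ c) (hcd : c ≠ d) (hda : d ≠ a) (h : Xor (a = c) (b = d)) :
    ({a, b, c, d} : Finset α).card = 3 := by
  rw [Finset.card_eq_three]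
  rcases h with ⟨rfl, hbd⟩ | ⟨rfl, hac⟩
  · exact ⟨a, b, d, hab, hda.symm, hbd, by ext; simp; tauto⟩
  · exact ⟨a, b, c, hab, hac, hbc, by ext; simp; tauto⟩

theorem tree_coloring_four_wheel_three_colors_general
    {V : Type*} (G : SimpleGraph V) (f : V → Fin 4) (hf : IsTreeColoring G f)
    (v v1 v2 v3 v4 : V)
    (hnbr : G.neighborSet v = {v1, v2, v3, v4})
    (h12 : G.Adj v1 v2) (h23 : G.Adj v2 v3) (h34 : G.Adj v3 v4) (h41 : G.Adj v4 v1)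
    (hne13 : v1 ≠ v3) (hne24 : v2 ≠ v4) :
    Xor' (f v1 = f v3) (f v2 = f v4) ∧
      ({f v1, f v2, f v3, f v4} : Finset (Fin 4)).card = 3 := by
  have hv : ∀ w ∈ ({v1, v2, v3, v4} : Set V), f v ≠ f w := fun w hw =>
    hf.1 (by rwa [← mem_neighborSet, hnbr])
  have hone : f v1 = f v3 ∨ f v2 = f v4 :=
    eq_or_eq_of_ne_of_card_le_four (Fintype.card_fin 4).le (hv v1 (by simp))
      (hv v2 (by simp)) (hv v3 (by simp)) (hv v4 (by simp)) (hf.1 h12) (hf.1 h23) (hf.1 h34)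
      (hf.1 h41)
  have hxor : Xor (f v1 = f v3) (f v2 = f v4) := (xor_iff_or_and_not_and _ _).2
    ⟨hone, hf.not_two_colored_four_cycle h12 h23 h34 h41 hne13 hne24⟩
  exact ⟨hxor, Finset.card_four_eq_three_of_xor (hf.1 h12) (hf.1 h23) (hf.1 h34)
    (hf.1 h41) hxor⟩

/-- If `v` is a vertex whose open neighborhood is exactly `{v1, v2, v3, v4}`, forming
an induced 4-cycle `v1 v2 v3 v4`, then under a tree-coloring exactly one of
`f v1 = f v3` and `f v2 = f v4` holds, and `f` uses exactly three colors on the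
neighborhood of `v`. -/
theorem tree_coloring_four_wheel_three_colors
    {V : Type*} (G : SimpleGraph V) (f : V → Fin 4) (hf : IsTreeColoring G f)
    (v v1 v2 v3 v4 : V)
    (hnbr : G.neighborSet v = {v1, v2, v3, v4})
    (h12 : G.Adj v1 v2) (h23 : G.Adj v2 v3) (h34 : G.Adj v3 v4) (h41 : G.Adj v4 v1)
    (h13 : ¬ G.Adj v1 v3) (h24 : ¬ G.Adj v2 v4)
    (hne13 : v1 ≠ v3) (hne24 : v2 ≠ v4) :
    Xor' (f v1 = f v3) (f v2 = f v4) ∧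
      ({f v1, f v2, f v3, f v4} : Finset (Fin 4)).card = 3 :=
  tree_coloring_four_wheel_three_colors_general G f hf v v1 v2 v3 v4 hnbr h12 h23 h34 h41 hne13
    hne24
end

section
/- Let G be a finite simple graph on n ≥ 5 vertices such that G is connected, G has exactly 3n − 6 edges, and the open neighborhood of every vertex induces a cycle in G (these conditions characterize 4-connected maximal planar graphs). Let f be a tree-coloring of G, and let v be a vertex of degree 4 whose neighbors in cyclic order around v are v1, v2, v3, v4 (so v1v2, v2v3, v3v4, v4v1 are edges and v1v3, v2v4 are non-edges), with f(v1) ≠ f(v3). Then f uses exactly three colors on {v1, v2, v3, v4}, and both v1 and v3 have degree at least 5 in G. -/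
/-!
Since `v` sees all of `v1, …, v4`, those four cannot carry four distinct colors, and as
`f v1 ≠ f v3` this forces `f v2 = f v4`.

For the degree bound at `v1`: its neighbors include `v, v2, v4`, and in the cycle induced on
`N(v1)` each of the non-adjacent `v2, v4` needs a second neighbor besides `v`. If `deg v1 ≤ 4`
this is one common vertex `u`. The colors of `v1, v2, v3, v` are pairwise distinct, so `u`,
adjacent to `v1` and `v2`, has the color of `v3` or of `v`, and then `v2 v3 v4 u` or
`v2 v v4 u` is a two-colored 4-cycle.
-/

open SimpleGraph

/-- The open neighborhood of `v` induces a cycle in `G`. -/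
def NeighborhoodInducesCycle {V : Type*} (G : SimpleGraph V) (v : V) : Prop :=
  ∃ m : ℕ, 3 ≤ m ∧ Nonempty ((G.induce (G.neighborSet v)) ≃g cycleGraph m)

theorem Fin.eq_or_eq_of_ne_of_ne {a b c d x : Fin 4} (hab : a ≠ b) (hac : a ≠ c) (had : a ≠ d)
    (hbc : b ≠ c) (hbd : b ≠ d) (hcd : c ≠ d) (hxa : x ≠ a) (hxb : x ≠ b) :
    x = c ∨ x = d := by
  omega

theorem Set.Nontrivial.ne_and_mem_of_subset_pair {α : Type*} {s : Set α} {a b : α}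
    (hs : s.Nontrivial) (h : s ⊆ {a, b}) : a ≠ b ∧ a ∈ s ∧ b ∈ s := by
  obtain ⟨x, hx, y, hy, hxy⟩ := hs
  rcases Set.subset_pair_iff.1 h x hx with rfl | rfl <;>
    rcases Set.subset_pair_iff.1 h y hy with rfl | rfl
  exacts [absurd rfl hxy, ⟨hxy, hx, hy⟩, ⟨hxy.symm, hy, hx⟩, absurd rfl hxy]

theorem Finset.exists_subset_insert_of_card_le {α : Type*} [DecidableEq α] [Nonempty α]
    {s t : Finset α} (hts : t ⊆ s) (hcard : s.card ≤ t.card + 1) :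
    ∃ u, s ⊆ insert u t := by
  obtain ⟨u, hu⟩ := Finset.card_le_one_iff_subset_singleton.1
    (by rw [Finset.card_sdiff_of_subset hts]; omega : (s \ t).card ≤ 1)
  exact ⟨u, by rw [Finset.insert_eq]; exact sdiff_le_iff'.1 hu⟩

namespace SimpleGraph

variable {V : Type*} {G : SimpleGraph V}

theorem IsAcyclic.commonNeighbors_subsingleton (hG : G.IsAcyclic) {v w : V} (hvw : v ≠ w) :
    (G.commonNeighbors v w).Subsingleton := by
  intro x hx y hy
  rw [mem_commonNeighbors] at hx hy
  let path (z : V) (hvz : G.Adj v z) (hwz : G.Adj w z) : G.Path v w :=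
    ⟨.cons hvz (.cons hwz.symm .nil), by simp [hvz.ne, hvw, hwz.ne']⟩
  have hpath := (hG.subsingleton_path v w).elim (path x hx.1 hx.2) (path y hy.1 hy.2)
  simpa [path] using congrArg (fun p : G.Path v w => p.1.support) hpath

theorem cycleGraph_neighborSet_nontrivial {m : ℕ} (hm : 3 ≤ m) (v : Fin m) :
    ((cycleGraph m).neighborSet v).Nontrivial := by
  obtain ⟨n, rfl⟩ : ∃ n, m = n + 3 := ⟨m - 3, by omega⟩
  rw [← Set.one_lt_ncard_iff_nontrivial, Set.ncard_eq_toFinset_card', Set.toFinset_card,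
    card_neighborSet_eq_degree, cycleGraph_degree_three_le]
  norm_num

end SimpleGraph

section

variable {V : Type*} {G : SimpleGraph V}

theorem NeighborhoodInducesCycle.commonNeighbors_nontrivial {w x : V}
    (h : NeighborhoodInducesCycle G w) (hx : G.Adj w x) :
    (G.commonNeighbors w x).Nontrivial := by
  obtain ⟨m, hm, ⟨e⟩⟩ := h
  obtain ⟨a, ha, b, hb, hab⟩ := cycleGraph_neighborSet_nontrivial hm (e ⟨x, hx⟩)
  have mem (c : Fin m) (hc : c ∈ (cycleGraph m).neighborSet (e ⟨x, hx⟩)) :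
      (e.symm c : V) ∈ G.commonNeighbors w x := by
    rw [mem_neighborSet, ← e.apply_symm_apply c, e.map_adj_iff] at hc
    exact (G.mem_commonNeighbors).2 ⟨(e.symm c).2, hc⟩
  exact ⟨_, mem a ha, _, mem b hb, fun h => hab (e.symm.injective (Subtype.ext h))⟩

theorem NeighborhoodInducesCycle.exists_commonNeighbor_of_degree_le_four {w v a b : V}
    [Fintype (G.neighborSet w)] (h : NeighborhoodInducesCycle G w) (hdeg : G.degree w ≤ 4)
    (hwv : G.Adj w v) (hwa : G.Adj w a) (hwb : G.Adj w b)
    (hva : v ≠ a) (hvb : v ≠ b) (hab : a ≠ b) (hnab : ¬ G.Adj a b) :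
    ∃ u ≠ v, G.Adj w u ∧ G.Adj a u ∧ G.Adj b u := by
  classical
  have : Nonempty V := ⟨v⟩
  obtain ⟨u, hu⟩ := Finset.exists_subset_insert_of_card_le (s := G.neighborFinset w)
    (t := {v, a, b}) (by simp [Finset.insert_subset_iff, hwv, hwa, hwb])
    (by rw [card_neighborFinset_eq_degree, Finset.card_eq_three.2 ⟨v, a, b, hva, hvb, hab, rfl⟩]
        omega)
  have hsub (c : V) (hca : ¬ G.Adj c a) (hcb : ¬ G.Adj c b) :
      G.commonNeighbors w c ⊆ {v, u} := by
    rintro y ⟨hwy, hcy⟩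
    have := hu ((G.mem_neighborFinset w y).2 hwy)
    simp only [Finset.mem_insert, Finset.mem_singleton] at this
    rcases this with rfl | rfl | rfl | rfl
    exacts [Or.inr rfl, Or.inl rfl, absurd hcy hca, absurd hcy hcb]
  obtain ⟨hvu, -, hwu, hau⟩ :=
    (h.commonNeighbors_nontrivial hwa).ne_and_mem_of_subset_pair (hsub a G.irrefl hnab)
  obtain ⟨-, -, -, hbu⟩ := (h.commonNeighbors_nontrivial hwb).ne_and_mem_of_subset_pair
    (hsub b (fun h => hnab h.symm) G.irrefl)
  exact ⟨u, hvu.symm, hwu, hau, hbu⟩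

variable {f : V → Fin 4}

theorem IsTreeColoring.eq_of_mem_commonNeighbors (hf : IsTreeColoring G f) {p q r s : V}
    (hpr : p ≠ r) (hfpr : f p = f r) (hq : q ∈ G.commonNeighbors p r)
    (hs : s ∈ G.commonNeighbors p r) (hfqs : f q = f s) : q = s := by
  have := (hf.2 (f p) (f q)).commonNeighbors_subsingleton
    (v := ⟨p, Or.inl rfl⟩) (w := ⟨r, Or.inl hfpr.symm⟩) (by simpa using hpr)
  exact congrArg Subtype.val
    (this (x := ⟨q, Or.inr rfl⟩) hq (y := ⟨s, Or.inr hfqs.symm⟩) hs)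

theorem IsTreeColoring.five_le_degree {w v a b x : V} [Fintype (G.neighborSet w)]
    (hf : IsTreeColoring G f) (hw : NeighborhoodInducesCycle G w)
    (hwv : G.Adj w v) (hwa : G.Adj w a) (hwb : G.Adj w b)
    (hva : G.Adj v a) (hvb : G.Adj v b) (hvx : G.Adj v x) (hax : G.Adj a x) (hbx : G.Adj b x)
    (hwx : ¬ G.Adj w x) (hab : a ≠ b) (hnab : ¬ G.Adj a b)
    (hfwx : f w ≠ f x) (hfab : f a = f b) : 5 ≤ G.degree w := by
  by_contra! hdeg
  obtain ⟨u, huv, hwu, hau, hbu⟩ :=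
    hw.exists_commonNeighbor_of_degree_le_four (by omega) hwv hwa hwb hva.ne hvb.ne hab hnab
  rcases Fin.eq_or_eq_of_ne_of_ne (hf.1 hwa) hfwx (hf.1 hwv) (hf.1 hax) (hf.1 hva.symm)
    (hf.1 hvx.symm) (hf.1 hwu).symm (hf.1 hau).symm with hfux | hfuv
  · have hxu := hf.eq_of_mem_commonNeighbors hab hfab ⟨hax, hbx⟩ ⟨hau, hbu⟩ hfux.symm
    exact hwx (hxu ▸ hwu)
  · exact huv (hf.eq_of_mem_commonNeighbors hab hfab ⟨hva.symm, hvb.symm⟩ ⟨hau, hbu⟩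
      hfuv.symm).symm

end

theorem tree_coloring_degree_four_neighbors_general
    {V : Type*} [Fintype V] (G : SimpleGraph V) [DecidableRel G.Adj]
    (hnbrcyc : ∀ u : V, NeighborhoodInducesCycle G u)
    (f : V → Fin 4) (hf : IsTreeColoring G f)
    (v v1 v2 v3 v4 : V)
    (hnbr : G.neighborSet v = {v1, v2, v3, v4})
    (h12 : G.Adj v1 v2) (h23 : G.Adj v2 v3) (h34 : G.Adj v3 v4) (h41 : G.Adj v4 v1)
    (h13 : ¬ G.Adj v1 v3) (h24 : ¬ G.Adj v2 v4)
    (hcol : f v1 ≠ f v3) :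
    ({f v1, f v2, f v3, f v4} : Finset (Fin 4)).card = 3 ∧
      5 ≤ G.degree v1 ∧ 5 ≤ G.degree v3 := by
  obtain ⟨hv1, hv2, hv3, hv4⟩ : G.Adj v v1 ∧ G.Adj v v2 ∧ G.Adj v v3 ∧ G.Adj v v4 := by
    simp [← mem_neighborSet, hnbr]
  have hne24 : v2 ≠ v4 := by
    refine ((hnbrcyc v).commonNeighbors_nontrivial hv1).ne_and_mem_of_subset_pair ?_ |>.1
    rintro y ⟨hvy, h1y⟩
    rw [hnbr] at hvy
    rcases hvy with rfl | rfl | rfl | rfl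
    exacts [absurd h1y G.irrefl, Or.inl rfl, absurd h1y h13, Or.inr rfl]
  have hf24 : f v2 = f v4 :=
    ((Fin.eq_or_eq_of_ne_of_ne (hf.1 hv1) (hf.1 hv2) (hf.1 hv3) (hf.1 h12) hcol (hf.1 h23)
      (hf.1 hv4).symm (hf.1 h41)).resolve_right (hf.1 h34).symm).symm
  refine ⟨?_, ?_, ?_⟩
  · rw [← hf24, Finset.card_eq_three]
    exact ⟨f v1, f v2, f v3, hf.1 h12, hcol, hf.1 h23, by ext; simp; tauto⟩
  · exact hf.five_le_degree (hnbrcyc v1) hv1.symm h12 h41.symm hv2 hv4 hv3 h23 h34.symm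
      h13 hne24 h24 hcol hf24
  · exact hf.five_le_degree (hnbrcyc v3) hv3.symm h23.symm h34 hv2 hv4 hv1 h12.symm h41
      (fun h => h13 h.symm) hne24 h24 hcol.symm hf24

/-- Lemma 1: in a tree-colorable 4-connected maximal planar graph, if `v` is a
degree-4 vertex with neighbors `v1 v2 v3 v4` in cyclic order and a tree-coloring `f`
satisfies `f v1 ≠ f v3`, then `f` uses exactly three colors on the neighborhood of `v`,
and both `v1` and `v3` have degree at least 5. -/
theorem tree_coloring_degree_four_neighbors
    {V : Type*} [Fintype V] [DecidableEq V] (G : SimpleGraph V) [DecidableRel G.Adj]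
    (hn : 5 ≤ Fintype.card V)
    (hconn : G.Connected)
    (hedges : G.edgeFinset.card = 3 * Fintype.card V - 6)
    (hnbrcyc : ∀ u : V, NeighborhoodInducesCycle G u)
    (f : V → Fin 4) (hf : IsTreeColoring G f)
    (v v1 v2 v3 v4 : V)
    (hdeg : G.degree v = 4)
    (hnbr : G.neighborSet v = {v1, v2, v3, v4})
    (h12 : G.Adj v1 v2) (h23 : G.Adj v2 v3) (h34 : G.Adj v3 v4) (h41 : G.Adj v4 v1)
    (h13 : ¬ G.Adj v1 v3) (h24 : ¬ G.Adj v2 v4)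
    (hcol : f v1 ≠ f v3) :
    ({f v1, f v2, f v3, f v4} : Finset (Fin 4)).card = 3 ∧
      5 ≤ G.degree v1 ∧ 5 ≤ G.degree v3 :=
  tree_coloring_degree_four_neighbors_general G hnbrcyc f hf v v1 v2 v3 v4 hnbr h12 h23 h34 h41 h13
    h24 hcol
end

section
/- Let G be a simple graph admitting a tree-coloring f, and let v be a vertex of G whose open neighborhood is exactly {v1, v2, v3, v4}, where v1v2, v2v3, v3v4, v4v1 are edges of G, v1v3 and v2v4 are not edges of G, and f(v1) = f(v3). Let H be the simple graph on the vertex set V(G) \ {v, v3} in which two distinct vertices x and y are adjacent if and only if xy is an edge of G, or x = v1 and y is adjacent to v3 in G, or y = v1 and x is adjacent to v3 in G (i.e., H is obtained from G by deleting v and identifying v1 with v3). Then H admits a tree-coloring; indeed, the restriction of f to V(G) \ {v, v3} is a tree-coloring of H. -/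
/-!
For colours `i, j`, the `{i, j}`-coloured part of `H` embeds into the `{i, j}`-coloured part of
`G` with `v3` identified into `v1`. If `f v1 ∉ {i, j}` nothing is identified. Otherwise the
other colour is the colour of one of `v, v2, v4`: these three and `v1` get four distinct colours
(`f v2 ≠ f v4` because the 4-cycle `v1 v2 v3 v4` is not 2-coloured). So `v1` and `v3` have a
common neighbour `m` in the `{i, j}`-forest, and identifying two vertices of a forest that are at
distance two creates no cycle: a new cycle would give a second path between them besides the
one through `m`.
-/

open SimpleGraph

namespace SimpleGraph

variable {V : Type*} {G : SimpleGraph V} {S : Set V} {a b m u w x y z : V}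

lemma IsAcyclic.mem_support_of_adj_of_adj (hG : G.IsAcyclic) {p : G.Walk x y} (hp : p.IsPath)
    (hxz : G.Adj x z) (hzy : G.Adj z y) (hxy : x ≠ y) : z ∈ p.support :=
  hG.mem_support_of_ne_mem_support_of_adj_of_isPath hp (.of_adj hxz) hzy.symm
    (by simp [hxy.symm, hzy.ne'])

lemma IsAcyclic.eq_of_common_neighbors (hG : G.IsAcyclic) (hxa : G.Adj x a) (hay : G.Adj a y)
    (hxb : G.Adj x b) (hby : G.Adj b y) (hxy : x ≠ y) : a = b := by
  have hp : (Walk.cons hxa (Walk.cons hay .nil)).IsPath :=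
    (Walk.IsPath.of_adj hay).cons (by simp [hxa.ne, hxy])
  have hb := hG.mem_support_of_adj_of_adj hp hxb hby hxy
  simp only [Walk.support_cons, Walk.support_nil, List.mem_cons, List.not_mem_nil,
    or_false] at hb
  rcases hb with rfl | rfl | rfl
  exacts [(hxb.ne rfl).elim, rfl, (hby.ne rfl).elim]

lemma IsAcyclic.eq_of_isPath_of_adj_of_adj (hG : G.IsAcyclic) (ham : G.Adj a m)
    (hmb : G.Adj m b) (hab : a ≠ b) {r : G.Walk w u} (hr : r.IsPath) (ha : a ∉ r.support)
    (hb : b ∉ r.support) (haw : G.Adj a w) (hub : G.Adj u b) : w = u := by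
  have hp : (Walk.cons haw (r.concat hub)).IsPath :=
    (hr.concat hb hub).cons (by simp [Walk.support_concat, ha, hab])
  have hq : (Walk.cons ham (Walk.cons hmb .nil)).IsPath :=
    (Walk.IsPath.of_adj hmb).cons (by simp [ham.ne, hab])
  have hlen := congrArg (fun p : G.Path a b => p.1.length)
    ((hG.subsingleton_path a b).elim ⟨_, hp⟩ ⟨_, hq⟩)
  simp only [Walk.length_cons, Walk.length_concat, Walk.length_nil] at hlen
  exact Walk.eq_of_length_eq_zero (p := r) (by omega)

lemma Walk.IsCycle.exists_isPath_of_adj_of_adj {c : G.Walk a a} (hc : c.IsCycle) :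
    ∃ w u, ∃ r : G.Walk w u,
      G.Adj a w ∧ G.Adj u a ∧ w ≠ u ∧ r.IsPath ∧ a ∉ r.support := by
  cases c with
  | nil => exact absurd hc Walk.not_isCycle_nil
  | cons haw p =>
    cases p with
    | nil => exact (haw.ne rfl).elim
    | cons h p =>
      obtain ⟨u, r, hua, hr⟩ := Walk.exists_cons_eq_concat h p
      rw [Walk.cons_isCycle_iff, hr, Walk.concat_isPath_iff] at hc
      obtain ⟨⟨hrp, har⟩, hedge⟩ := hc
      refine ⟨_, u, r, haw, hua, ?_, hrp, har⟩
      rintro rfl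
      rw [Walk.eq_nil_iff_nil.mpr (Walk.isPath_iff_nil.mp hrp)] at hedge
      exact hedge (by simp [Sym2.eq_swap])

/-- Identify `b` into `a`: the vertex `b` becomes isolated and its neighbours are joined
to `a`. -/
def identify (G : SimpleGraph V) (a b : V) : SimpleGraph V :=
  fromRel fun x y => x ≠ b ∧ y ≠ b ∧ (G.Adj x y ∨ x = a ∧ G.Adj b y)

lemma ne_of_identify_adj (h : (G.identify a b).Adj x y) : x ≠ b := by
  rcases h.2 with h | h
  exacts [h.1, h.2.1]

lemma adj_of_identify_adj (h : (G.identify a b).Adj x y) (hx : x ≠ a) (hy : y ≠ a) :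
    G.Adj x y := by
  rcases h.2 with ⟨-, -, h | ⟨rfl, -⟩⟩ | ⟨-, -, h | ⟨rfl, -⟩⟩
  exacts [h, (hx rfl).elim, h.symm, (hy rfl).elim]

lemma adj_or_adj_of_identify_adj (h : (G.identify a b).Adj a y) : G.Adj a y ∨ G.Adj b y := by
  rcases h.2 with ⟨-, -, h | ⟨-, h⟩⟩ | ⟨-, -, h | ⟨rfl, -⟩⟩
  exacts [.inl h, .inr h, .inl h.symm, (h.1 rfl).elim]

lemma apply_ne_of_identify_adj {α : Type*} {g : V → α}
    (hg : ∀ ⦃u v : V⦄, G.Adj u v → g u ≠ g v) (hab : g a = g b)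
    (h : (G.identify a b).Adj x y) : g x ≠ g y := by
  rcases h.2 with ⟨-, -, hxy | ⟨rfl, hby⟩⟩ | ⟨-, -, hyx | ⟨rfl, hbx⟩⟩
  exacts [hg hxy, hab ▸ hg hby, (hg hyx).symm, hab ▸ (hg hbx).symm]

lemma edges_subset_edgeSet_of_identify {r : (G.identify a b).Walk x y} (ha : a ∉ r.support) :
    ∀ e ∈ r.edges, e ∈ G.edgeSet := by
  intro e he
  induction e using Sym2.ind with
  | _ x y =>
    exact adj_of_identify_adj (r.adj_of_mem_edges he)
      (fun h => ha (h ▸ r.fst_mem_support_of_mem_edges he))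
      (fun h => ha (h ▸ r.snd_mem_support_of_mem_edges he))

lemma notMem_support_of_identify (r : (G.identify a b).Walk x y) (hy : y ≠ b) :
    b ∉ r.support := by
  induction r with
  | nil => simpa using hy.symm
  | cons h r ih => simpa [(ne_of_identify_adj h).symm] using ih hy

theorem IsAcyclic.identify (hG : G.IsAcyclic) (ham : G.Adj a m) (hmb : G.Adj m b) :
    (G.identify a b).IsAcyclic := by
  classical
  intro c p hp
  by_cases ha : a ∈ p.support
  · obtain ⟨w, u, r, haw, hua, hwu, hr, har⟩ := (hp.rotate ha).exists_isPath_of_adj_of_adj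
    have hrG := edges_subset_edgeSet_of_identify har
    have hr' := hr.transfer hrG
    have hsupp : (r.transfer G hrG).support = r.support := Walk.support_transfer _ _
    have hbr : b ∉ r.support := notMem_support_of_identify r (ne_of_identify_adj hua)
    have hab : a ≠ b := ne_of_identify_adj haw
    -- in `G`, each of the two ends `w`, `u` of the cycle's path `r` is attached to `a` or `b`
    rcases adj_or_adj_of_identify_adj haw with hw | hw <;>
      rcases adj_or_adj_of_identify_adj hua.symm with hu | hu
    · exact har (hsupp ▸ hG.mem_support_of_adj_of_adj hr' hw.symm hu hwu)
    · exact hwu (hG.eq_of_isPath_of_adj_of_adj ham hmb hab hr' (hsupp ▸ har) (hsupp ▸ hbr)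
        hw hu.symm)
    · exact hwu (hG.eq_of_isPath_of_adj_of_adj ham hmb hab hr'.reverse
        (by simpa [hsupp] using har) (by simpa [hsupp] using hbr) hu hw.symm).symm
    · exact hbr (hsupp ▸ hG.mem_support_of_adj_of_adj hr' hw.symm hu hwu)
  · exact hG _ (hp.transfer (edges_subset_edgeSet_of_identify ha))

lemma isAcyclic_induce_identify_of_notMem (hG : (G.induce S).IsAcyclic) (ha : a ∉ S) :
    ((G.identify a b).induce S).IsAcyclic :=
  hG.comap ⟨id, fun {x y} (h : (G.identify a b).Adj x y) =>
    adj_of_identify_adj (G := G) h (fun hx => ha (hx ▸ x.2)) (fun hy => ha (hy ▸ y.2))⟩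
    Function.injective_id

lemma isAcyclic_induce_identify (hG : (G.induce S).IsAcyclic) (ha : a ∈ S) (hb : b ∈ S)
    (hm : m ∈ S) (ham : G.Adj a m) (hmb : G.Adj m b) :
    ((G.identify a b).induce S).IsAcyclic :=
  (hG.identify (a := ⟨a, ha⟩) (b := ⟨b, hb⟩) (m := ⟨m, hm⟩) (by exact ham)
      (by exact hmb)).comap
    ⟨id, fun {x y} (h : (G.identify a b).Adj x y) => by
      simpa [identify, Subtype.ext_iff] using h⟩ Function.injective_id

end SimpleGraph

section TreeColoring

variable {V : Type*} {G : SimpleGraph V} {f : V → Fin 4}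

lemma isTreeColoring_of_forall_ne (hproper : ∀ ⦃u v : V⦄, G.Adj u v → f u ≠ f v)
    (hacyc : ∀ i j, i ≠ j → (G.induce {v | f v = i ∨ f v = j}).IsAcyclic) :
    IsTreeColoring G f := by
  refine ⟨hproper, fun i j => ?_⟩
  obtain ⟨k, hk⟩ := exists_ne i
  rcases eq_or_ne i j with rfl | hij
  · exact (hacyc i k hk.symm).embedding
      (G.induceHomOfLE fun v (hv : f v = i ∨ f v = i) => .inl (hv.elim id id))
  · exact hacyc i j hij

lemma IsTreeColoring.eq_of_common_neighbors (hf : IsTreeColoring G f) {x y a b : V}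
    (hxa : G.Adj x a) (hay : G.Adj a y) (hxb : G.Adj x b) (hby : G.Adj b y) (hxy : x ≠ y)
    (hfxy : f x = f y) (hfab : f a = f b) : a = b :=
  congrArg Subtype.val <| (hf.2 (f x) (f a)).eq_of_common_neighbors
    (x := ⟨x, .inl rfl⟩) (y := ⟨y, .inl hfxy.symm⟩) (a := ⟨a, .inr rfl⟩)
    (b := ⟨b, .inr hfab.symm⟩) (by exact hxa) (by exact hay) (by exact hxb) (by exact hby)
    (by simpa using hxy)

lemma IsTreeColoring.exists_common_neighbor_of_four_wheel (hf : IsTreeColoring G f)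
    {v v1 v2 v3 v4 : V} (hv1 : G.Adj v v1) (hv2 : G.Adj v v2) (hv3 : G.Adj v v3)
    (hv4 : G.Adj v v4) (h12 : G.Adj v1 v2) (h23 : G.Adj v2 v3) (h34 : G.Adj v3 v4)
    (h41 : G.Adj v4 v1) (hne13 : v1 ≠ v3) (hne24 : v2 ≠ v4) (hcol : f v1 = f v3) :
    ∀ d ≠ f v1, ∃ m, G.Adj v1 m ∧ G.Adj m v3 ∧ f m = d := by
  intro d hd
  have h24 : f v2 ≠ f v4 := fun h =>
    hne24 (hf.eq_of_common_neighbors h12 h23 h41.symm h34.symm hne13 hcol h)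
  have := hf.1 hv1; have := hf.1 hv2; have := hf.1 hv4; have := hf.1 h12; have := hf.1 h41
  rcases (by omega : d = f v ∨ d = f v2 ∨ d = f v4) with rfl | rfl | rfl
  exacts [⟨v, hv1.symm, hv3, rfl⟩, ⟨v2, h12, h23, rfl⟩, ⟨v4, h41.symm, h34.symm, rfl⟩]

end TreeColoring

theorem tree_coloring_contract_four_wheel_general
    {V : Type*} (G : SimpleGraph V) (f : V → Fin 4) (hf : IsTreeColoring G f)
    (v v1 v2 v3 v4 : V)
    (hnbr : G.neighborSet v = {v1, v2, v3, v4})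
    (h12 : G.Adj v1 v2) (h23 : G.Adj v2 v3) (h34 : G.Adj v3 v4) (h41 : G.Adj v4 v1)
    (hne13 : v1 ≠ v3) (hne24 : v2 ≠ v4)
    (hcol : f v1 = f v3)
    (H : SimpleGraph {x : V // x ≠ v ∧ x ≠ v3})
    (hH : ∀ x y : {x : V // x ≠ v ∧ x ≠ v3},
      H.Adj x y ↔ x ≠ y ∧ (G.Adj x.1 y.1 ∨ (x.1 = v1 ∧ G.Adj v3 y.1) ∨
        (y.1 = v1 ∧ G.Adj v3 x.1))) :
    IsTreeColoring H (fun x => f x.1) := by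
  have hv : ∀ x ∈ ({v1, v2, v3, v4} : Set V), G.Adj v x := fun x hx => by rwa [← hnbr] at hx
  have hcommon := hf.exists_common_neighbor_of_four_wheel (hv v1 (by simp)) (hv v2 (by simp))
    (hv v3 (by simp)) (hv v4 (by simp)) h12 h23 h34 h41 hne13 hne24 hcol
  have hHG : ∀ x y, H.Adj x y → (G.identify v1 v3).Adj x.1 y.1 := by
    intro x y h
    obtain ⟨hxy, h⟩ := (hH x y).mp h
    refine ⟨fun e => hxy (Subtype.ext e), ?_⟩
    rcases h with h | ⟨hx, h⟩ | ⟨hy, h⟩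
    exacts [.inl ⟨x.2.2, y.2.2, .inl h⟩, .inl ⟨x.2.2, y.2.2, .inr ⟨hx, h⟩⟩,
      .inr ⟨y.2.2, x.2.2, .inr ⟨hy, h⟩⟩]
  refine isTreeColoring_of_forall_ne
    (fun x y h => apply_ne_of_identify_adj hf.1 hcol (hHG x y h)) fun i j hij => ?_
  have hK : ((G.identify v1 v3).induce {x | f x = i ∨ f x = j}).IsAcyclic := by
    by_cases h1 : f v1 = i ∨ f v1 = j
    · obtain ⟨d, hd, hdij⟩ : ∃ d ≠ f v1, d = i ∨ d = j := by
        rcases h1 with h | h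
        exacts [⟨j, by omega, .inr rfl⟩, ⟨i, by omega, .inl rfl⟩]
      obtain ⟨m, h1m, hm3, rfl⟩ := hcommon d hd
      exact isAcyclic_induce_identify (hf.2 i j) h1
        (show f v3 = i ∨ f v3 = j from hcol ▸ h1) hdij h1m hm3
    · exact isAcyclic_induce_identify_of_notMem (hf.2 i j) h1
  let ψ : H →g G.identify v1 v3 := ⟨Subtype.val, hHG _ _⟩
  exact hK.comap (induceHom ψ fun _ hx => hx)
    (induceHom_injective _ _ Subtype.val_injective.injOn)

/-- Lemma 2 (coloring transfer): let `v` be a vertex whose open neighborhood is exactly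
`{v1, v2, v3, v4}`, forming an induced 4-cycle `v1 v2 v3 v4`, and let `f` be a
tree-coloring of `G` with `f v1 = f v3`. If `H` is the graph on `V(G) \ {v, v3}`
obtained from `G` by deleting `v` and identifying `v1` with `v3` (two distinct vertices
`x, y` of `H` are adjacent iff `xy ∈ E(G)`, or `x = v1` and `y` is adjacent to `v3`, or
`y = v1` and `x` is adjacent to `v3`), then the restriction of `f` is a tree-coloring
of `H`. -/
theorem tree_coloring_contract_four_wheel
    {V : Type*} (G : SimpleGraph V) (f : V → Fin 4) (hf : IsTreeColoring G f)
    (v v1 v2 v3 v4 : V)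
    (hnbr : G.neighborSet v = {v1, v2, v3, v4})
    (h12 : G.Adj v1 v2) (h23 : G.Adj v2 v3) (h34 : G.Adj v3 v4) (h41 : G.Adj v4 v1)
    (h13 : ¬ G.Adj v1 v3) (h24 : ¬ G.Adj v2 v4)
    (hne13 : v1 ≠ v3) (hne24 : v2 ≠ v4)
    (hcol : f v1 = f v3)
    (H : SimpleGraph {x : V // x ≠ v ∧ x ≠ v3})
    (hH : ∀ x y : {x : V // x ≠ v ∧ x ≠ v3},
      H.Adj x y ↔ x ≠ y ∧ (G.Adj x.1 y.1 ∨ (x.1 = v1 ∧ G.Adj v3 y.1) ∨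
        (y.1 = v1 ∧ G.Adj v3 x.1))) :
    IsTreeColoring H (fun x => f x.1) :=
  tree_coloring_contract_four_wheel_general G f hf v v1 v2 v3 v4 hnbr h12 h23 h34 h41 hne13 hne24
    hcol H hH
end

section
/- Let G be the pentagonal bipyramid: the simple graph on seven vertices c1, c2, c3, c4, c5, a, b whose edges are the 5-cycle c1c2, c2c3, c3c4, c4c5, c5c1 together with all edges from a to each ci and from b to each ci (a and b are not adjacent); equivalently, G is the join of the cycle C5 with the empty graph on two vertices. Then G admits no tree-coloring: for every proper coloring f : V(G) → Fin 4 there exist two colors i, j such that the subgraph of G induced by the vertices colored i or j contains a cycle. -/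
/-
The five rim vertices induce a 5-cycle, which is not 2-colourable, so they use at least
three colours. Both apices are adjacent to the whole rim, so with only four colours the rim
uses exactly three and the two apices share the fourth. Five rim vertices in three colours
force two distinct rim vertices `p`, `q` of the same colour, and then `apex₀ – p – apex₁ – q`
is a 4-cycle in the subgraph induced by two colour classes.
-/

open SimpleGraph

/-- The pentagonal bipyramid: the join of a 5-cycle (vertices `Sum.inl i`) with two
nonadjacent apex vertices (`Sum.inr 0` and `Sum.inr 1`). -/
def pentagonalBipyramid : SimpleGraph (Fin 5 ⊕ Fin 2) :=
  SimpleGraph.fromRel (fun x y =>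
    match x, y with
    | Sum.inl i, Sum.inl j => j = i + 1
    | Sum.inl _, Sum.inr _ => True
    | _, _ => False)

open Finset

namespace SimpleGraph

variable {V : Type*} {G : SimpleGraph V}

theorem Coloring.chromaticNumber_le_card_image [Fintype V] {α : Type*} [DecidableEq α]
    (C : G.Coloring α) : G.chromaticNumber ≤ (univ.image C).card := by
  let C' : G.Coloring (univ.image C) :=
    Coloring.mk (fun v => ⟨C v, mem_image_of_mem C (mem_univ v)⟩)
      fun h => by simpa [Subtype.ext_iff] using C.valid h
  simpa using C'.colorable.chromaticNumber_le

theorem not_isAcyclic_of_adj_of_adj {a b x y : V} (hax : G.Adj a x) (hxb : G.Adj x b)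
    (hay : G.Adj a y) (hyb : G.Adj y b) (hab : a ≠ b) (hxy : x ≠ y) : ¬ G.IsAcyclic := by
  intro hG
  have hpath : ∀ {z : V} (haz : G.Adj a z) (hzb : G.Adj z b), (haz.toWalk.concat hzb).IsPath :=
    fun haz hzb => by simp [Walk.concat, hab, haz.ne, hzb.ne]
  have hxy' := congrArg Subtype.val
    ((hG.subsingleton_path a b).elim ⟨_, hpath hax hxb⟩ ⟨_, hpath hay hyb⟩)
  simp only [Walk.concat, Walk.append, Walk.cons.injEq] at hxy'
  exact hxy hxy'.1

theorem not_isAcyclic_induce_of_adj_of_adj {s : Set V} {a b x y : V} (ha : a ∈ s) (hb : b ∈ s)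
    (hx : x ∈ s) (hy : y ∈ s) (hax : G.Adj a x) (hxb : G.Adj x b) (hay : G.Adj a y)
    (hyb : G.Adj y b) (hab : a ≠ b) (hxy : x ≠ y) : ¬ (G.induce s).IsAcyclic :=
  not_isAcyclic_of_adj_of_adj (a := ⟨a, ha⟩) (b := ⟨b, hb⟩) (x := ⟨x, hx⟩) (y := ⟨y, hy⟩)
    hax hxb hay hyb (by simpa using hab) (by simpa using hxy)

end SimpleGraph

namespace pentagonalBipyramid

theorem adj_inl_inr (i : Fin 5) (k : Fin 2) :
    pentagonalBipyramid.Adj (Sum.inl i) (Sum.inr k) := by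
  simp [pentagonalBipyramid]

def cycleGraphHom : cycleGraph 5 →g pentagonalBipyramid where
  toFun := Sum.inl
  map_rel' := by
    simp only [pentagonalBipyramid, fromRel_adj, cycleGraph_adj]
    decide

variable (C : pentagonalBipyramid.Coloring (Fin 4))

def rimColors : Finset (Fin 4) := univ.image fun i => C (Sum.inl i)

theorem three_le_card_rimColors : 3 ≤ (rimColors C).card := by
  have h := Coloring.chromaticNumber_le_card_image (C.comp cycleGraphHom)
  rw [chromaticNumber_cycleGraph_of_odd 5 (by norm_num) (by decide)] at h
  exact_mod_cast h

theorem apex_color_notMem_rimColors (k : Fin 2) : C (Sum.inr k) ∉ rimColors C := by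
  simp only [rimColors, mem_image, mem_univ, true_and, not_exists]
  exact fun i => C.valid (adj_inl_inr i k)

theorem card_rimColors : (rimColors C).card = 3 := by
  refine le_antisymm ?_ (three_le_card_rimColors C)
  calc _ ≤ (univ.erase (C (Sum.inr 0))).card :=
        card_le_card fun c hc =>
          mem_erase.2 ⟨fun h => apex_color_notMem_rimColors C 0 (h ▸ hc), mem_univ c⟩
    _ = 3 := by simp

theorem apex_colors_eq : C (Sum.inr 0) = C (Sum.inr 1) := by
  have h : (rimColors C)ᶜ.card ≤ 1 := by simp [card_compl, card_rimColors C]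
  exact card_le_one.1 h _ (mem_compl.2 (apex_color_notMem_rimColors C 0)) _
    (mem_compl.2 (apex_color_notMem_rimColors C 1))

theorem exists_ne_inl_color_eq : ∃ p q : Fin 5, p ≠ q ∧ C (Sum.inl p) = C (Sum.inl q) := by
  obtain ⟨p, -, q, -, hpq, h⟩ := exists_ne_map_eq_of_card_lt_of_maps_to
    (s := (univ : Finset (Fin 5))) (t := rimColors C) (by simp [card_rimColors C])
    fun i _ => mem_image_of_mem _ (mem_univ i)
  exact ⟨p, q, hpq, h⟩

end pentagonalBipyramid

/-- The pentagonal bipyramid admits no tree-coloring: every proper 4-coloring has two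
color classes whose union induces a subgraph containing a cycle. -/
theorem pentagonalBipyramid_no_tree_coloring
    (f : Fin 5 ⊕ Fin 2 → Fin 4)
    (hf : ∀ ⦃u v : Fin 5 ⊕ Fin 2⦄, pentagonalBipyramid.Adj u v → f u ≠ f v) :
    ∃ i j : Fin 4,
      ¬ (pentagonalBipyramid.induce {v | f v = i ∨ f v = j}).IsAcyclic := by
  let C : pentagonalBipyramid.Coloring (Fin 4) := Coloring.mk f fun h => hf h
  obtain ⟨p, q, hpq, hpq_color⟩ := pentagonalBipyramid.exists_ne_inl_color_eq C
  refine ⟨f (Sum.inr 0), f (Sum.inl p), ?_⟩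
  exact not_isAcyclic_induce_of_adj_of_adj (a := Sum.inr 0) (b := Sum.inr 1)
    (Or.inl rfl) (Or.inl (pentagonalBipyramid.apex_colors_eq C).symm)
    (Or.inr rfl) (Or.inr hpq_color.symm)
    (pentagonalBipyramid.adj_inl_inr p 0).symm (pentagonalBipyramid.adj_inl_inr p 1)
    (pentagonalBipyramid.adj_inl_inr q 0).symm (pentagonalBipyramid.adj_inl_inr q 1)
    (by simp) (by simpa using hpq)
end
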